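/- Let Q_n be the para-chain square cactus of order n. (i) For every k ≥ 1: if n = 2k then ABC_GG(Q_n) = 8·Σ_{i=1}^{k} √((6k−1)/((6k−3i+2)(3i−1))), and if n = 2k+1 then ABC_GG(Q_n) = 8·Σ_{i=1}^{k} √((6k+2)/((6k−3i+5)(3i−1))) + 4√(6k+2)/(3k+2). (ii) For every n ≥ 2, ABC(Q_n) = 2n√2. -/

import Mathlib

open Finset

/-- The atom-bond connectivity index `ABC(G)`. -/
noncomputable def abcIndex {V : Type*} [Fintype V] (G : SimpleGraph V) : ℝ := by
  classical
  exact ∑ e ∈ G.edgeFinset,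
    Sym2.lift ⟨fun u v =>
      Real.sqrt (((G.degree u : ℝ) + (G.degree v : ℝ) - 2) /
        ((G.degree u : ℝ) * (G.degree v : ℝ))),
      fun u v => congrArg Real.sqrt (by ring)⟩ e

/-- `nClose G u v` is the number of vertices reachable from `u` that are strictly
closer to `u` than to `v`. -/
noncomputable def nClose {V : Type*} (G : SimpleGraph V) (u v : V) : ℕ :=
  Nat.card {w : V | G.Reachable u w ∧ G.dist w u < G.dist w v}

/-- The Graovac–Ghorbani index `ABC_GG(G)`. -/
noncomputable def abcggIndex {V : Type*} [Fintype V] (G : SimpleGraph V) : ℝ := by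
  classical
  exact ∑ e ∈ G.edgeFinset,
    Sym2.lift ⟨fun u v =>
      Real.sqrt (((nClose G u v : ℝ) + (nClose G v u : ℝ) - 2) /
        ((nClose G u v : ℝ) * (nClose G v u : ℝ))),
      fun u v => congrArg Real.sqrt (by ring)⟩ e

/-- The degree of a vertex, as a real number. -/
noncomputable def degR {V : Type*} [Fintype V] (G : SimpleGraph V) (v : V) : ℝ := by
  classical
  exact (G.degree v : ℝ)

/-- The para-chain square cactus `Q n`: vertices `c 0, …, c n` (`Sum.inl`) and
`a 1, …, a n`, `b 1, …, b n` (`Sum.inr`), the `i`-th square having edges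
`c (i-1) — a i`, `c (i-1) — b i`, `a i — c i` and `b i — c i`. -/
def paraChainSquare (n : ℕ) : SimpleGraph (Fin (n + 1) ⊕ Fin n ⊕ Fin n) :=
  SimpleGraph.fromRel (fun p q =>
    ∃ j : Fin n,
      (p = Sum.inl j.castSucc ∧ q = Sum.inr (Sum.inl j)) ∨
      (p = Sum.inl j.castSucc ∧ q = Sum.inr (Sum.inr j)) ∨
      (p = Sum.inr (Sum.inl j) ∧ q = Sum.inl j.succ) ∨
      (p = Sum.inr (Sum.inr j) ∧ q = Sum.inl j.succ))



-- generic counting helpers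
lemma card_filter_sum_type {A B : Type*} [Fintype A] [Fintype B]
    (P : A ⊕ B → Prop) [DecidablePred P] :
    ((univ : Finset (A ⊕ B)).filter P).card =
      ((univ : Finset A).filter (fun a => P (Sum.inl a))).card +
      ((univ : Finset B).filter (fun b => P (Sum.inr b))).card := by
  rw [← Finset.card_toLeft_add_card_toRight (u := univ.filter P)]
  congr 1
  · apply Finset.card_nbij id <;> intro x <;> simp
  · apply Finset.card_nbij id <;> intro x <;> simp

lemma card_filter_fin_le (m a : ℕ) :
    ((univ : Finset (Fin m)).filter fun y => y.val ≤ a).card = min (a + 1) m := by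
  classical
  rw [← Finset.card_image_of_injective _ Fin.val_injective]
  have : ((univ : Finset (Fin m)).filter fun y => y.val ≤ a).image Fin.val
      = Finset.range (min (a+1) m) := by
    ext y
    simp only [Finset.mem_image, Finset.mem_filter, Finset.mem_univ, true_and,
      Finset.mem_range, lt_min_iff]
    constructor
    · rintro ⟨z, hz, rfl⟩; omega
    · rintro ⟨h1, h2⟩; exact ⟨⟨y, h2⟩, by simp; omega, rfl⟩
  rw [this, Finset.card_range]

lemma card_filter_fin_lt (m a : ℕ) :
    ((univ : Finset (Fin m)).filter fun y => a < y.val).card = m - (a + 1) := by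
  classical
  have h := Finset.card_filter_add_card_filter_not
    (s := (univ : Finset (Fin m))) (p := fun y : Fin m => y.val ≤ a)
  rw [card_filter_fin_le] at h
  have h2 : ((univ : Finset (Fin m)).filter fun y => ¬ y.val ≤ a)
      = ((univ : Finset (Fin m)).filter fun y => a < y.val) := by
    apply Finset.filter_congr; intro x _; simp
  rw [h2] at h
  simp only [Finset.card_univ, Fintype.card_fin] at h
  omega

lemma card_filter_fin_ltv (m a : ℕ) :
    ((univ : Finset (Fin m)).filter fun y => y.val < a).card = min a m := by
  classical
  rw [← Finset.card_image_of_injective _ Fin.val_injective]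
  have himg : ((univ : Finset (Fin m)).filter fun y => y.val < a).image Fin.val
      = Finset.range (min a m) := by
    ext y
    simp only [Finset.mem_image, Finset.mem_filter, Finset.mem_univ, true_and,
      Finset.mem_range, lt_min_iff]
    constructor
    · rintro ⟨z, hz, rfl⟩; exact ⟨hz, z.isLt⟩
    · rintro ⟨h1, h2⟩; exact ⟨⟨y, h2⟩, h1, rfl⟩
  rw [himg, Finset.card_range]

lemma card_filter_fin_ge (m a : ℕ) :
    ((univ : Finset (Fin m)).filter fun y => a ≤ y.val).card = m - a := by
  classical
  have h := Finset.card_filter_add_card_filter_not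
    (s := (univ : Finset (Fin m))) (p := fun y : Fin m => y.val < a)
  have h2 : ((univ : Finset (Fin m)).filter fun y => ¬ y.val < a)
      = ((univ : Finset (Fin m)).filter fun y => a ≤ y.val) := by
    apply Finset.filter_congr; intro x _; simp
  rw [card_filter_fin_ltv, h2] at h
  simp only [Finset.card_univ, Fintype.card_fin] at h
  omega

namespace PCS


variable {n : ℕ}

/-- vertex level -/
def lvl : (Fin (n + 1) ⊕ Fin n ⊕ Fin n) → ℕ
  | Sum.inl x => 2 * x.val
  | Sum.inr (Sum.inl j) => 2 * j.val + 1
  | Sum.inr (Sum.inr j) => 2 * j.val + 1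

/-- middle vertex of square `j`, side `s` -/
def mid (s : Bool) (j : Fin n) : (Fin (n + 1) ⊕ Fin n ⊕ Fin n) :=
  if s then Sum.inr (Sum.inl j) else Sum.inr (Sum.inr j)

@[simp] lemma lvl_mid (s : Bool) (j : Fin n) : lvl (mid s j) = 2 * j.val + 1 := by
  cases s <;> rfl

@[simp] lemma lvl_inl (x : Fin (n+1)) : lvl (Sum.inl x : Fin (n + 1) ⊕ Fin n ⊕ Fin n) = 2 * x.val := rfl

lemma mid_ne_inl (s : Bool) (j : Fin n) (x : Fin (n+1)) : mid s j ≠ Sum.inl x := by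
  cases s <;> simp [mid]

lemma adj_mid_castSucc (s : Bool) (j : Fin n) :
    (paraChainSquare n).Adj (mid s j) (Sum.inl j.castSucc) := by
  rw [paraChainSquare, SimpleGraph.fromRel_adj]
  refine ⟨mid_ne_inl s j _, Or.inr ⟨j, ?_⟩⟩
  cases s <;> simp [mid]

lemma adj_mid_succ (s : Bool) (j : Fin n) :
    (paraChainSquare n).Adj (mid s j) (Sum.inl j.succ) := by
  rw [paraChainSquare, SimpleGraph.fromRel_adj]
  refine ⟨mid_ne_inl s j _, Or.inl ⟨j, ?_⟩⟩
  cases s <;> simp [mid]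

/-- adjacency characterization -/
lemma adj_iff {p q : Fin (n + 1) ⊕ Fin n ⊕ Fin n} :
    (paraChainSquare n).Adj p q ↔
      ∃ (s : Bool) (j : Fin n) (x : Fin (n+1)),
        (x = j.castSucc ∨ x = j.succ) ∧
        ((p = mid s j ∧ q = Sum.inl x) ∨ (q = mid s j ∧ p = Sum.inl x)) := by
  rw [paraChainSquare, SimpleGraph.fromRel_adj]
  constructor
  · rintro ⟨hne, (⟨j, h⟩ | ⟨j, h⟩)⟩
    · rcases h with ⟨hp, hq⟩ | ⟨hp, hq⟩ | ⟨hp, hq⟩ | ⟨hp, hq⟩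
      · exact ⟨true, j, j.castSucc, Or.inl rfl, Or.inr ⟨hq, hp⟩⟩
      · exact ⟨false, j, j.castSucc, Or.inl rfl, Or.inr ⟨hq, hp⟩⟩
      · exact ⟨true, j, j.succ, Or.inr rfl, Or.inl ⟨hp, hq⟩⟩
      · exact ⟨false, j, j.succ, Or.inr rfl, Or.inl ⟨hp, hq⟩⟩
    · rcases h with ⟨hq, hp⟩ | ⟨hq, hp⟩ | ⟨hq, hp⟩ | ⟨hq, hp⟩
      · exact ⟨true, j, j.castSucc, Or.inl rfl, Or.inl ⟨hp, hq⟩⟩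
      · exact ⟨false, j, j.castSucc, Or.inl rfl, Or.inl ⟨hp, hq⟩⟩
      · exact ⟨true, j, j.succ, Or.inr rfl, Or.inr ⟨hq, hp⟩⟩
      · exact ⟨false, j, j.succ, Or.inr rfl, Or.inr ⟨hq, hp⟩⟩
  · rintro ⟨s, j, x, hx, (⟨hp, hq⟩ | ⟨hq, hp⟩)⟩ <;> subst hp <;> subst hq <;>
      refine ⟨?_, ?_⟩
    · exact (mid_ne_inl s j x)
    · rcases hx with rfl | rfl
      · exact Or.inr ⟨j, by cases s <;> simp [mid]⟩
      · exact Or.inl ⟨j, by cases s <;> simp [mid]⟩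
    · exact fun h => (mid_ne_inl s j x) h.symm
    · rcases hx with rfl | rfl
      · exact Or.inl ⟨j, by cases s <;> simp [mid]⟩
      · exact Or.inr ⟨j, by cases s <;> simp [mid]⟩

lemma lvl_adj {p q : Fin (n + 1) ⊕ Fin n ⊕ Fin n} (h : (paraChainSquare n).Adj p q) :
    lvl p + 1 = lvl q ∨ lvl q + 1 = lvl p := by
  rw [adj_iff] at h
  obtain ⟨s, j, x, hx, (⟨rfl, rfl⟩ | ⟨rfl, rfl⟩)⟩ := h <;>
    rcases hx with rfl | rfl <;> simp [Fin.val_succ] <;> omega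


lemma natDist_le_walk_length {p q : Fin (n + 1) ⊕ Fin n ⊕ Fin n}
    (W : (paraChainSquare n).Walk p q) : Nat.dist (lvl p) (lvl q) ≤ W.length := by
  induction W with
  | nil => simp [Nat.dist_self]
  | cons h W ih =>
    rename_i u v w
    have h1 : Nat.dist (lvl u) (lvl v) = 1 := by
      rcases lvl_adj h with h' | h' <;> simp [Nat.dist] <;> omega
    calc Nat.dist (lvl u) (lvl w) ≤ Nat.dist (lvl u) (lvl v) + Nat.dist (lvl v) (lvl w) :=
          Nat.dist.triangle_inequality _ _ _
      _ ≤ 1 + W.length := by omega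
      _ = (SimpleGraph.Walk.cons h W).length := by simp [SimpleGraph.Walk.length_cons]; omega

-- walks between consecutive c vertices
lemma walk_c_step (j : Fin n) :
    ∃ W : (paraChainSquare n).Walk (Sum.inl j.castSucc) (Sum.inl j.succ), W.length = 2 :=
  ⟨SimpleGraph.Walk.cons (adj_mid_castSucc true j).symm
    (SimpleGraph.Walk.cons (adj_mid_succ true j) SimpleGraph.Walk.nil), rfl⟩

lemma walk_c_up : ∀ (d : ℕ) (x y : Fin (n+1)), x.val + d = y.val →
    ∃ W : (paraChainSquare n).Walk (Sum.inl x) (Sum.inl y), W.length = 2 * d := by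
  intro d
  induction d with
  | zero =>
    intro x y h
    have : x = y := Fin.ext (by omega)
    subst this
    exact ⟨SimpleGraph.Walk.nil, rfl⟩
  | succ d ih =>
    intro x y h
    have hxn : x.val < n := by omega
    obtain ⟨W1, hW1⟩ := walk_c_step (⟨x.val, hxn⟩ : Fin n)
    obtain ⟨W2, hW2⟩ := ih (⟨x.val, hxn⟩ : Fin n).succ y (by simp [Fin.val_succ]; omega)
    refine ⟨W1.append W2, ?_⟩
    simp [SimpleGraph.Walk.length_append, hW1, hW2]; omega

lemma walk_cc (x y : Fin (n+1)) :
    ∃ W : (paraChainSquare n).Walk (Sum.inl x) (Sum.inl y),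
      W.length = Nat.dist (2 * x.val) (2 * y.val) := by
  rcases le_total x.val y.val with h | h
  · obtain ⟨W, hW⟩ := walk_c_up (y.val - x.val) x y (by omega)
    exact ⟨W, by simp [hW, Nat.dist]; omega⟩
  · obtain ⟨W, hW⟩ := walk_c_up (x.val - y.val) y x (by omega)
    exact ⟨W.reverse, by simp [hW, Nat.dist]; omega⟩

lemma walk_mid_c (s : Bool) (j : Fin n) (y : Fin (n+1)) :
    ∃ W : (paraChainSquare n).Walk (mid s j) (Sum.inl y),
      W.length = Nat.dist (2 * j.val + 1) (2 * y.val) := by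
  rcases le_or_gt y.val j.val with h | h
  · obtain ⟨W, hW⟩ := walk_cc j.castSucc y (n := n)
    refine ⟨SimpleGraph.Walk.cons (adj_mid_castSucc s j) W, ?_⟩
    simp [SimpleGraph.Walk.length_cons, hW, Nat.dist, Fin.coe_castSucc]; omega
  · obtain ⟨W, hW⟩ := walk_cc j.succ y (n := n)
    refine ⟨SimpleGraph.Walk.cons (adj_mid_succ s j) W, ?_⟩
    simp [SimpleGraph.Walk.length_cons, hW, Nat.dist, Fin.val_succ]; omega

lemma walk_mid_mid (s t : Bool) (j j' : Fin n) (hne : j ≠ j') :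
    ∃ W : (paraChainSquare n).Walk (mid s j) (mid t j'),
      W.length = Nat.dist (2 * j.val + 1) (2 * j'.val + 1) := by
  have hv : j.val ≠ j'.val := fun h => hne (Fin.ext h)
  rcases lt_or_gt_of_ne hv with h | h
  · obtain ⟨W, hW⟩ := walk_mid_c t j' j.succ
    refine ⟨SimpleGraph.Walk.cons (adj_mid_succ s j) W.reverse, ?_⟩
    simp [SimpleGraph.Walk.length_cons, hW, Nat.dist, Fin.val_succ]; omega
  · obtain ⟨W, hW⟩ := walk_mid_c s j j'.succ
    refine ⟨(SimpleGraph.Walk.cons (adj_mid_succ t j') W.reverse).reverse, ?_⟩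
    simp [SimpleGraph.Walk.length_cons, hW, Nat.dist, Fin.val_succ]; omega

lemma walk_ab (s t : Bool) (j : Fin n) :
    ∃ W : (paraChainSquare n).Walk (mid s j) (mid t j), W.length = 2 :=
  ⟨SimpleGraph.Walk.cons (adj_mid_castSucc s j)
    (SimpleGraph.Walk.cons (adj_mid_castSucc t j).symm SimpleGraph.Walk.nil), rfl⟩

lemma connected : (paraChainSquare n).Connected := by
  rw [SimpleGraph.connected_iff]
  refine ⟨?_, ⟨Sum.inl 0⟩⟩
  intro p q
  match p, q with
  | Sum.inl x, Sum.inl y => exact (walk_cc x y).elim (fun W _ => ⟨W⟩)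
  | Sum.inl x, Sum.inr (Sum.inl j) => exact (walk_mid_c true j x).elim (fun W _ => ⟨W.reverse⟩)
  | Sum.inl x, Sum.inr (Sum.inr j) => exact (walk_mid_c false j x).elim (fun W _ => ⟨W.reverse⟩)
  | Sum.inr (Sum.inl j), Sum.inl y => exact (walk_mid_c true j y).elim (fun W _ => ⟨W⟩)
  | Sum.inr (Sum.inr j), Sum.inl y => exact (walk_mid_c false j y).elim (fun W _ => ⟨W⟩)
  | Sum.inr (Sum.inl j), Sum.inr (Sum.inl j') =>
    rcases eq_or_ne j j' with rfl | hne
    · exact ⟨SimpleGraph.Walk.nil⟩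
    · exact (walk_mid_mid true true j j' hne).elim (fun W _ => ⟨W⟩)
  | Sum.inr (Sum.inl j), Sum.inr (Sum.inr j') =>
    rcases eq_or_ne j j' with rfl | hne
    · exact (walk_ab true false j).elim (fun W _ => ⟨W⟩)
    · exact (walk_mid_mid true false j j' hne).elim (fun W _ => ⟨W⟩)
  | Sum.inr (Sum.inr j), Sum.inr (Sum.inl j') =>
    rcases eq_or_ne j j' with rfl | hne
    · exact (walk_ab false true j).elim (fun W _ => ⟨W⟩)
    · exact (walk_mid_mid false true j j' hne).elim (fun W _ => ⟨W⟩)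
  | Sum.inr (Sum.inr j), Sum.inr (Sum.inr j') =>
    rcases eq_or_ne j j' with rfl | hne
    · exact ⟨SimpleGraph.Walk.nil⟩
    · exact (walk_mid_mid false false j j' hne).elim (fun W _ => ⟨W⟩)


variable {n : ℕ}

lemma mid_eq_iff {s t : Bool} {j j' : Fin n} : mid s j = mid t j' ↔ s = t ∧ j = j' := by
  cases s <;> cases t <;> simp [mid]

lemma eq_of_lvl_odd {w : Fin (n + 1) ⊕ Fin n ⊕ Fin n} {j : Fin n}
    (h : lvl w = 2 * j.val + 1) : w = mid true j ∨ w = mid false j := by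
  match w with
  | Sum.inl x => simp only [lvl_inl] at h; omega
  | Sum.inr (Sum.inl j') =>
    left
    have : j' = j := Fin.ext (by have := h; simp [lvl] at this; omega)
    subst this; rfl
  | Sum.inr (Sum.inr j') =>
    right
    have : j' = j := Fin.ext (by have := h; simp [lvl] at this; omega)
    subst this; rfl

lemma eq_of_lvl_even {w : Fin (n + 1) ⊕ Fin n ⊕ Fin n} {x : Fin (n+1)}
    (h : lvl w = 2 * x.val) : w = Sum.inl x := by
  match w with
  | Sum.inl y =>
    have : y = x := Fin.ext (by simp only [lvl_inl] at h; omega)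
    subst this; rfl
  | Sum.inr (Sum.inl j') => simp [lvl] at h; omega
  | Sum.inr (Sum.inr j') => simp [lvl] at h; omega

lemma exists_walk_natDist {p q : Fin (n + 1) ⊕ Fin n ⊕ Fin n}
    (h : lvl p ≠ lvl q ∨ p = q) :
    ∃ W : (paraChainSquare n).Walk p q, W.length = Nat.dist (lvl p) (lvl q) := by
  rcases h with h | rfl
  · match p, q with
    | Sum.inl x, Sum.inl y => exact walk_cc x y
    | Sum.inr (Sum.inl j), Sum.inl y => exact walk_mid_c true j y
    | Sum.inr (Sum.inr j), Sum.inl y => exact walk_mid_c false j y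
    | Sum.inl x, Sum.inr (Sum.inl j) =>
      obtain ⟨W, hW⟩ := walk_mid_c true j x
      exact ⟨W.reverse, W.length_reverse.trans (hW.trans (Nat.dist_comm _ _))⟩
    | Sum.inl x, Sum.inr (Sum.inr j) =>
      obtain ⟨W, hW⟩ := walk_mid_c false j x
      exact ⟨W.reverse, W.length_reverse.trans (hW.trans (Nat.dist_comm _ _))⟩
    | Sum.inr (Sum.inl j), Sum.inr (Sum.inl j') =>
      refine walk_mid_mid true true j j' (fun he => h ?_)
      subst he; rfl
    | Sum.inr (Sum.inl j), Sum.inr (Sum.inr j') =>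
      refine walk_mid_mid true false j j' (fun he => h ?_)
      subst he; rfl
    | Sum.inr (Sum.inr j), Sum.inr (Sum.inl j') =>
      refine walk_mid_mid false true j j' (fun he => h ?_)
      subst he; rfl
    | Sum.inr (Sum.inr j), Sum.inr (Sum.inr j') =>
      refine walk_mid_mid false false j j' (fun he => h ?_)
      subst he; rfl
  · exact ⟨SimpleGraph.Walk.nil, by simp [Nat.dist_self]⟩

lemma dist_eq_natDist {p q : Fin (n + 1) ⊕ Fin n ⊕ Fin n}
    (h : lvl p ≠ lvl q ∨ p = q) :
    (paraChainSquare n).dist p q = Nat.dist (lvl p) (lvl q) := by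
  obtain ⟨W, hW⟩ := exists_walk_natDist h
  refine le_antisymm (hW ▸ SimpleGraph.dist_le W) ?_
  rcases eq_or_ne p q with rfl | hne
  · simp [Nat.dist_self]
  · have hd : (paraChainSquare n).dist p q ≠ 0 := by
      rw [SimpleGraph.dist_ne_zero_iff_ne_and_reachable]
      exact ⟨hne, connected.preconnected p q⟩
    obtain ⟨W', hW'⟩ := SimpleGraph.exists_walk_of_dist_ne_zero hd
    exact hW' ▸ natDist_le_walk_length W'

lemma not_adj_mid (s t : Bool) (j j' : Fin n) :
    ¬ (paraChainSquare n).Adj (mid s j) (mid t j') := by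
  rw [adj_iff]
  rintro ⟨s', j'', x, -, (⟨-, h⟩ | ⟨-, h⟩)⟩ <;> exact mid_ne_inl _ _ _ h

lemma dist_mid_mid_same (s t : Bool) (j : Fin n) (hst : s ≠ t) :
    (paraChainSquare n).dist (mid s j) (mid t j) = 2 := by
  have hne : mid s j ≠ mid t j := fun h => hst (mid_eq_iff.mp h).1
  obtain ⟨W, hW⟩ := walk_ab s t j
  refine le_antisymm (hW ▸ SimpleGraph.dist_le W) ?_
  have h1 : 0 < (paraChainSquare n).dist (mid s j) (mid t j) :=
    connected.pos_dist_of_ne hne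
  have h2 : ¬ (paraChainSquare n).Adj (mid s j) (mid t j) := not_adj_mid s t j j
  rw [← SimpleGraph.dist_eq_one_iff_adj] at h2
  omega

/-- distance from any vertex to a `c` vertex -/
lemma dist_to_inl (w : Fin (n + 1) ⊕ Fin n ⊕ Fin n) (x : Fin (n+1)) :
    (paraChainSquare n).dist w (Sum.inl x) = Nat.dist (lvl w) (2 * x.val) := by
  have : (paraChainSquare n).dist w (Sum.inl x) = Nat.dist (lvl w) (lvl (Sum.inl x)) := by
    apply dist_eq_natDist
    by_cases h : lvl w = lvl (Sum.inl x)
    · exact Or.inr (by rw [lvl_inl] at h; exact eq_of_lvl_even h)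
    · exact Or.inl h
  simpa using this

/-- distance from any vertex other than the opposite mid to a mid vertex -/
lemma dist_to_mid (w : Fin (n + 1) ⊕ Fin n ⊕ Fin n) (s : Bool) (j : Fin n)
    (hw : w ≠ mid (!s) j) :
    (paraChainSquare n).dist w (mid s j) = Nat.dist (lvl w) (2 * j.val + 1) := by
  have : (paraChainSquare n).dist w (mid s j) = Nat.dist (lvl w) (lvl (mid s j)) := by
    apply dist_eq_natDist
    by_cases h : lvl w = lvl (mid s j)
    · refine Or.inr ?_
      rw [lvl_mid] at h
      rcases eq_of_lvl_odd h with rfl | rfl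
      · cases s
        · exact absurd rfl hw
        · rfl
      · cases s
        · rfl
        · exact absurd rfl hw
    · exact Or.inl h
  simpa using this

lemma nClose_eq_card (u v : Fin (n + 1) ⊕ Fin n ⊕ Fin n) [DecidablePred fun w => (paraChainSquare n).dist w u < (paraChainSquare n).dist w v] :
    nClose (paraChainSquare n) u v =
      ((univ : Finset _).filter
        (fun w => (paraChainSquare n).dist w u < (paraChainSquare n).dist w v)).card := by
  have hs : {w | (paraChainSquare n).Reachable u w ∧
      (paraChainSquare n).dist w u < (paraChainSquare n).dist w v}
      = {w | (paraChainSquare n).dist w u < (paraChainSquare n).dist w v} := by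
    ext w
    simp [connected.preconnected u w]
  rw [nClose, hs, Nat.card_coe_set_eq, Set.ncard_eq_toFinset_card', Set.toFinset_setOf]

lemma card_lvl_gt (j : Fin n) :
    ((univ : Finset (Fin (n + 1) ⊕ Fin n ⊕ Fin n)).filter
      fun w => 2 * j.val < lvl w).card = 3 * n - 3 * j.val := by
  classical
  rw [card_filter_sum_type, card_filter_sum_type]
  have e1 : ((univ : Finset (Fin (n+1))).filter fun x => 2 * j.val < lvl (Sum.inl x : Fin (n + 1) ⊕ Fin n ⊕ Fin n)).card
      = ((univ : Finset (Fin (n+1))).filter fun x => j.val + 1 ≤ x.val).card := by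
    apply congrArg
    apply Finset.filter_congr
    intro x _
    simp only [lvl_inl, eq_iff_iff]
    omega
  have e2 : ∀ f : Fin n → Fin (n + 1) ⊕ Fin n ⊕ Fin n, (∀ j', lvl (f j') = 2 * j'.val + 1) →
      ((univ : Finset (Fin n)).filter fun j' => 2 * j.val < lvl (f j')).card
      = ((univ : Finset (Fin n)).filter fun j' => j.val ≤ j'.val).card := by
    intro f hf
    apply congrArg
    apply Finset.filter_congr
    intro x _
    simp only [hf, eq_iff_iff]
    omega
  rw [e1, e2 (fun j' => Sum.inr (Sum.inl j')) (fun _ => rfl),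
    e2 (fun j' => Sum.inr (Sum.inr j')) (fun _ => rfl),
    card_filter_fin_ge, card_filter_fin_ge]
  have := j.isLt
  omega

lemma card_lvl_le (j : Fin n) :
    ((univ : Finset (Fin (n + 1) ⊕ Fin n ⊕ Fin n)).filter
      fun w => lvl w ≤ 2 * j.val).card = 3 * j.val + 1 := by
  classical
  rw [card_filter_sum_type, card_filter_sum_type]
  have e1 : ((univ : Finset (Fin (n+1))).filter fun x => lvl (Sum.inl x : Fin (n + 1) ⊕ Fin n ⊕ Fin n) ≤ 2 * j.val).card
      = ((univ : Finset (Fin (n+1))).filter fun x => x.val < j.val + 1).card := by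
    apply congrArg; apply Finset.filter_congr; intro x _
    simp only [lvl_inl, eq_iff_iff]; omega
  have e2 : ∀ f : Fin n → Fin (n + 1) ⊕ Fin n ⊕ Fin n, (∀ j', lvl (f j') = 2 * j'.val + 1) →
      ((univ : Finset (Fin n)).filter fun j' => lvl (f j') ≤ 2 * j.val).card
      = ((univ : Finset (Fin n)).filter fun j' => j'.val < j.val).card := by
    intro f hf
    apply congrArg; apply Finset.filter_congr; intro x _
    simp only [hf, eq_iff_iff]; omega
  rw [e1, e2 (fun j' => Sum.inr (Sum.inl j')) (fun _ => rfl),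
    e2 (fun j' => Sum.inr (Sum.inr j')) (fun _ => rfl),
    card_filter_fin_ltv, card_filter_fin_ltv]
  have := j.isLt
  omega


variable {n : ℕ}

lemma bne_ne (s : Bool) : (!s) ≠ s := by cases s <;> simp

lemma ne_not_mid (s : Bool) (j : Fin n) : mid s j ≠ mid (!s) j := by
  cases s <;> simp [mid]

lemma nClose_mid_castSucc (s : Bool) (j : Fin n) :
    nClose (paraChainSquare n) (mid s j) (Sum.inl j.castSucc) = 3 * n - 3 * j.val - 1 := by
  classical
  rw [nClose_eq_card]
  have hmem : mid (!s) j ∈ (univ : Finset (Fin (n + 1) ⊕ Fin n ⊕ Fin n)).filter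
      (fun w => 2 * j.val < lvl w) := by
    simp [lvl_mid]
  have hset : ((univ : Finset (Fin (n + 1) ⊕ Fin n ⊕ Fin n)).filter
      (fun w => (paraChainSquare n).dist w (mid s j) <
        (paraChainSquare n).dist w (Sum.inl j.castSucc)))
      = ((univ : Finset (Fin (n + 1) ⊕ Fin n ⊕ Fin n)).filter
          (fun w => 2 * j.val < lvl w)).erase (mid (!s) j) := by
    ext w
    simp only [Finset.mem_filter, Finset.mem_univ, true_and, Finset.mem_erase]
    by_cases hw : w = mid (!s) j
    · subst hw
      rw [dist_mid_mid_same (!s) s j (bne_ne s), dist_to_inl]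
      simp [Nat.dist, Fin.coe_castSucc]
    · rw [dist_to_mid w s j hw, dist_to_inl]
      simp only [Fin.coe_castSucc, ne_eq, hw, not_false_eq_true, true_and]
      simp only [Nat.dist]
      omega
  rw [hset, Finset.card_erase_of_mem hmem, card_lvl_gt]

lemma nClose_castSucc_mid (s : Bool) (j : Fin n) :
    nClose (paraChainSquare n) (Sum.inl j.castSucc) (mid s j) = 3 * j.val + 2 := by
  classical
  rw [nClose_eq_card]
  have hnmem : mid (!s) j ∉ (univ : Finset (Fin (n + 1) ⊕ Fin n ⊕ Fin n)).filter
      (fun w => lvl w ≤ 2 * j.val) := by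
    simp [lvl_mid]
  have hset : ((univ : Finset (Fin (n + 1) ⊕ Fin n ⊕ Fin n)).filter
      (fun w => (paraChainSquare n).dist w (Sum.inl j.castSucc) <
        (paraChainSquare n).dist w (mid s j)))
      = insert (mid (!s) j) ((univ : Finset (Fin (n + 1) ⊕ Fin n ⊕ Fin n)).filter
          (fun w => lvl w ≤ 2 * j.val)) := by
    ext w
    simp only [Finset.mem_filter, Finset.mem_univ, true_and, Finset.mem_insert]
    by_cases hw : w = mid (!s) j
    · subst hw
      rw [dist_mid_mid_same (!s) s j (bne_ne s), dist_to_inl]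
      simp [Nat.dist, Fin.coe_castSucc]
    · rw [dist_to_mid w s j hw, dist_to_inl]
      simp only [Fin.coe_castSucc, hw, false_or]
      simp only [Nat.dist]
      omega
  rw [hset, Finset.card_insert_of_notMem hnmem, card_lvl_le]

lemma nClose_mid_succ (s : Bool) (j : Fin n) :
    nClose (paraChainSquare n) (mid s j) (Sum.inl j.succ) = 3 * j.val + 2 := by
  classical
  rw [nClose_eq_card]
  have hnmem : mid s j ∉ (univ : Finset (Fin (n + 1) ⊕ Fin n ⊕ Fin n)).filter
      (fun w => lvl w ≤ 2 * j.val) := by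
    simp [lvl_mid]
  have hset : ((univ : Finset (Fin (n + 1) ⊕ Fin n ⊕ Fin n)).filter
      (fun w => (paraChainSquare n).dist w (mid s j) <
        (paraChainSquare n).dist w (Sum.inl j.succ)))
      = insert (mid s j) ((univ : Finset (Fin (n + 1) ⊕ Fin n ⊕ Fin n)).filter
          (fun w => lvl w ≤ 2 * j.val)) := by
    ext w
    simp only [Finset.mem_filter, Finset.mem_univ, true_and, Finset.mem_insert]
    by_cases hw : w = mid (!s) j
    · subst hw
      rw [dist_mid_mid_same (!s) s j (bne_ne s), dist_to_inl]
      have h1 : mid (!s) j ≠ mid s j := (ne_not_mid s j).symm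
      simp [Nat.dist, Fin.val_succ, h1]
      all_goals omega
    · rw [dist_to_mid w s j hw, dist_to_inl]
      by_cases hw2 : w = mid s j
      · subst hw2
        simp [Nat.dist, Fin.val_succ]
        all_goals omega
      · simp only [Fin.val_succ, hw2, false_or]
        simp only [Nat.dist, lvl_mid]
        have hlw : lvl w ≠ 2 * j.val + 1 := by
          intro h
          rcases eq_of_lvl_odd h with h' | h'
          · cases s
            · exact hw h'
            · exact hw2 h'
          · cases s
            · exact hw2 h'
            · exact hw h'
        omega
  rw [hset, Finset.card_insert_of_notMem hnmem, card_lvl_le]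

lemma nClose_succ_mid (s : Bool) (j : Fin n) :
    nClose (paraChainSquare n) (Sum.inl j.succ) (mid s j) = 3 * n - 3 * j.val - 1 := by
  classical
  rw [nClose_eq_card]
  have hmem : mid s j ∈ (univ : Finset (Fin (n + 1) ⊕ Fin n ⊕ Fin n)).filter
      (fun w => 2 * j.val < lvl w) := by
    simp [lvl_mid]
  have hset : ((univ : Finset (Fin (n + 1) ⊕ Fin n ⊕ Fin n)).filter
      (fun w => (paraChainSquare n).dist w (Sum.inl j.succ) <
        (paraChainSquare n).dist w (mid s j)))
      = ((univ : Finset (Fin (n + 1) ⊕ Fin n ⊕ Fin n)).filter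
          (fun w => 2 * j.val < lvl w)).erase (mid s j) := by
    ext w
    simp only [Finset.mem_filter, Finset.mem_univ, true_and, Finset.mem_erase]
    by_cases hw : w = mid (!s) j
    · subst hw
      rw [dist_mid_mid_same (!s) s j (bne_ne s), dist_to_inl]
      have h1 : mid (!s) j ≠ mid s j := (ne_not_mid s j).symm
      simp [Nat.dist, Fin.val_succ, h1]
      all_goals omega
    · rw [dist_to_mid w s j hw, dist_to_inl]
      by_cases hw2 : w = mid s j
      · subst hw2
        simp [Nat.dist, Fin.val_succ]
        all_goals omega
      · simp only [Fin.val_succ, ne_eq, hw2, not_false_eq_true, true_and]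
        simp only [Nat.dist]
        have hlw : lvl w ≠ 2 * j.val + 1 := by
          intro h
          rcases eq_of_lvl_odd h with h' | h'
          · cases s
            · exact hw h'
            · exact hw2 h'
          · cases s
            · exact hw2 h'
            · exact hw h'
        omega
  rw [hset, Finset.card_erase_of_mem hmem, card_lvl_gt]


variable {n : ℕ}

lemma castSucc_ne_succ (j : Fin n) : j.castSucc ≠ j.succ := by
  intro h
  have := congrArg Fin.val h
  simp [Fin.coe_castSucc, Fin.val_succ] at this

lemma neighborFinset_mid (s : Bool) (j : Fin n)
    [Fintype ((paraChainSquare n).neighborSet (mid s j))] :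
    (paraChainSquare n).neighborFinset (mid s j) =
      {Sum.inl j.castSucc, Sum.inl j.succ} := by
  ext w
  rw [SimpleGraph.mem_neighborFinset, adj_iff]
  constructor
  · rintro ⟨s', j', x, hx, (⟨hm, rfl⟩ | ⟨hm, hp⟩)⟩
    · obtain ⟨rfl, rfl⟩ := mid_eq_iff.mp hm
      rcases hx with rfl | rfl <;> simp
    · exact absurd hp (mid_ne_inl _ _ _)
  · intro hw
    rcases Finset.mem_insert.mp hw with rfl | h
    · exact ⟨s, j, j.castSucc, Or.inl rfl, Or.inl ⟨rfl, rfl⟩⟩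
    · have hw2 : w = Sum.inl j.succ := by simpa using h
      subst hw2
      exact ⟨s, j, j.succ, Or.inr rfl, Or.inl ⟨rfl, rfl⟩⟩

lemma degree_mid (s : Bool) (j : Fin n)
    [Fintype ((paraChainSquare n).neighborSet (mid s j))] :
    (paraChainSquare n).degree (mid s j) = 2 := by
  rw [← SimpleGraph.card_neighborFinset_eq_degree, neighborFinset_mid]
  exact Finset.card_pair (fun h => castSucc_ne_succ j (Sum.inl_injective h))

def cEnd (e : Bool) (j : Fin n) : Fin (n + 1) := if e then j.castSucc else j.succ

def edgeMap (i : Fin n × Bool × Bool) : Sym2 (Fin (n + 1) ⊕ Fin n ⊕ Fin n) :=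
  s(mid i.2.1 i.1, Sum.inl (cEnd i.2.2 i.1))

lemma adj_mid_cEnd (s e : Bool) (j : Fin n) :
    (paraChainSquare n).Adj (mid s j) (Sum.inl (cEnd e j)) := by
  cases e
  · exact adj_mid_succ s j
  · exact adj_mid_castSucc s j

lemma cEnd_inj {e e' : Bool} {j : Fin n} (h : cEnd e j = cEnd e' j) : e = e' := by
  cases e <;> cases e' <;> first
    | rfl
    | (exfalso; revert h; simp [cEnd]
       first
         | exact castSucc_ne_succ j
         | exact fun h => castSucc_ne_succ j h.symm)

lemma edgeMap_injOn :
    ∀ i ∈ (univ : Finset (Fin n × Bool × Bool)), ∀ i' ∈ univ,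
      edgeMap i = edgeMap i' → i = i' := by
  rintro ⟨j, s, e⟩ - ⟨j', s', e'⟩ - h
  rw [edgeMap, edgeMap, Sym2.eq_iff] at h
  rcases h with ⟨h1, h2⟩ | ⟨h1, h2⟩
  · obtain ⟨rfl, rfl⟩ := mid_eq_iff.mp h1
    obtain rfl := cEnd_inj (Sum.inl_injective h2)
    rfl
  · exact absurd h1 (mid_ne_inl _ _ _)

lemma edgeFinset_eq [Fintype (paraChainSquare n).edgeSet] :
    (paraChainSquare n).edgeFinset = Finset.image edgeMap univ := by
  ext e
  induction e with
  | _ p q =>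
    rw [SimpleGraph.mem_edgeFinset, SimpleGraph.mem_edgeSet, adj_iff]
    simp only [Finset.mem_image, Finset.mem_univ, true_and]
    constructor
    · rintro ⟨s, j, x, hx, (⟨rfl, rfl⟩ | ⟨rfl, rfl⟩)⟩
      · refine ⟨(j, s, if x = j.castSucc then true else false), ?_⟩
        rcases hx with rfl | rfl
        · simp [edgeMap, cEnd]
        · rw [if_neg (fun h => castSucc_ne_succ j h.symm)]
          simp [edgeMap, cEnd]
      · refine ⟨(j, s, if x = j.castSucc then true else false), ?_⟩
        rcases hx with rfl | rfl
        · simp only [if_pos rfl]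
          rw [edgeMap]
          simp [cEnd, Sym2.eq_swap]
        · rw [if_neg (fun h => castSucc_ne_succ j h.symm)]
          rw [edgeMap]
          simp [cEnd, Sym2.eq_swap]
    · rintro ⟨⟨j, s, ev⟩, h⟩
      rw [edgeMap, Sym2.eq_iff] at h
      rcases h with ⟨h1, h2⟩ | ⟨h1, h2⟩
      · refine ⟨s, j, cEnd ev j, ?_, Or.inl ⟨h1.symm, h2.symm⟩⟩
        cases ev
        · exact Or.inr rfl
        · exact Or.inl rfl
      · refine ⟨s, j, cEnd ev j, ?_, Or.inr ⟨h1.symm, h2.symm⟩⟩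
        cases ev
        · exact Or.inr rfl
        · exact Or.inl rfl

lemma sum_edges [Fintype (paraChainSquare n).edgeSet] {M : Type*} [AddCommMonoid M] (g : Sym2 (Fin (n + 1) ⊕ Fin n ⊕ Fin n) → M) :
    ∑ e ∈ (paraChainSquare n).edgeFinset, g e
      = ∑ j : Fin n, ((g (edgeMap (j, true, true)) + g (edgeMap (j, true, false)))
          + (g (edgeMap (j, false, true)) + g (edgeMap (j, false, false)))) := by
  rw [edgeFinset_eq, Finset.sum_image edgeMap_injOn, Fintype.sum_prod_type]
  congr 1
  ext j
  rw [Fintype.sum_prod_type]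
  rw [Fintype.sum_bool]
  congr 1 <;> rw [Fintype.sum_bool]


variable {n : ℕ}

/-- the per-square GG term, as a function of `n` and the (0-based) square index -/
noncomputable def T (n j : ℕ) : ℝ :=
  Real.sqrt ((3 * (n:ℝ) - 1) / ((3 * (j:ℝ) + 2) * (3 * (n:ℝ) - 3 * (j:ℝ) - 1)))

lemma cast_sub_helper (j : Fin n) :
    ((3 * n - 3 * j.val - 1 : ℕ) : ℝ) = 3 * (n:ℝ) - 3 * (j.val:ℝ) - 1 := by
  have hj : j.val < n := j.isLt
  rw [Nat.cast_sub (by omega : 1 ≤ 3 * n - 3 * j.val), Nat.cast_sub (by omega : 3 * j.val ≤ 3 * n)]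
  push_cast
  ring

lemma gg_square (j : Fin n) (s e : Bool) :
    Real.sqrt (((nClose (paraChainSquare n) (mid s j) (Sum.inl (cEnd e j)) : ℝ) +
        (nClose (paraChainSquare n) (Sum.inl (cEnd e j)) (mid s j) : ℝ) - 2) /
      ((nClose (paraChainSquare n) (mid s j) (Sum.inl (cEnd e j)) : ℝ) *
        (nClose (paraChainSquare n) (Sum.inl (cEnd e j)) (mid s j) : ℝ)))
      = T n j.val := by
  have hA := cast_sub_helper j
  have hB : ((3 * j.val + 2 : ℕ) : ℝ) = 3 * (j.val:ℝ) + 2 := by push_cast; ring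
  cases e
  · rw [show cEnd false j = j.succ from rfl, nClose_mid_succ, nClose_succ_mid, hA, hB, T]
    congr 1
    ring
  · rw [show cEnd true j = j.castSucc from rfl, nClose_mid_castSucc, nClose_castSucc_mid, hA, hB, T]
    congr 1
    ring


lemma abcgg_formula : abcggIndex (paraChainSquare n) = ∑ j : Fin n, 4 * T n j.val := by
  classical
  unfold abcggIndex
  rw [sum_edges]
  apply Finset.sum_congr rfl
  intro j _
  simp only [edgeMap, Sym2.lift_mk]
  rw [gg_square j true true, gg_square j true false, gg_square j false true,
    gg_square j false false]
  ring

lemma sqrt_half : Real.sqrt (1/2 : ℝ) = Real.sqrt 2 / 2 := by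
  rw [show (1/2 : ℝ) = 2 / 4 by norm_num, Real.sqrt_div (by norm_num : (0:ℝ) ≤ 2),
    show (4:ℝ) = 2^2 by norm_num, Real.sqrt_sq (by norm_num : (0:ℝ) ≤ 2)]

lemma abc_formula : abcIndex (paraChainSquare n) = 2 * (n:ℝ) * Real.sqrt 2 := by
  classical
  unfold abcIndex
  rw [sum_edges]
  have hterm : ∀ (j : Fin n) (s e : Bool),
      Real.sqrt ((((paraChainSquare n).degree (mid s j) : ℝ) +
          ((paraChainSquare n).degree (Sum.inl (cEnd e j)) : ℝ) - 2) /
        (((paraChainSquare n).degree (mid s j) : ℝ) *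
          ((paraChainSquare n).degree (Sum.inl (cEnd e j)) : ℝ)))
      = Real.sqrt 2 / 2 := by
    intro j s e
    have hd : 0 < (paraChainSquare n).degree (Sum.inl (cEnd e j)) := by
      rw [SimpleGraph.degree_pos_iff_exists_adj]
      exact ⟨mid s j, (adj_mid_cEnd s e j).symm⟩
    have hdR : (0:ℝ) < ((paraChainSquare n).degree (Sum.inl (cEnd e j)) : ℝ) := by
      exact_mod_cast hd
    rw [degree_mid, ← sqrt_half]
    congr 1
    push_cast
    field_simp
    ring
  have hsum : ∀ j : Fin n,
      ((Sym2.lift ⟨fun u v =>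
      Real.sqrt ((((paraChainSquare n).degree u : ℝ) + ((paraChainSquare n).degree v : ℝ) - 2) /
        (((paraChainSquare n).degree u : ℝ) * ((paraChainSquare n).degree v : ℝ))),
      fun u v => congrArg Real.sqrt (by ring)⟩ (edgeMap (j, true, true)) +
      Sym2.lift ⟨fun u v =>
      Real.sqrt ((((paraChainSquare n).degree u : ℝ) + ((paraChainSquare n).degree v : ℝ) - 2) /
        (((paraChainSquare n).degree u : ℝ) * ((paraChainSquare n).degree v : ℝ))),
      fun u v => congrArg Real.sqrt (by ring)⟩ (edgeMap (j, true, false))) +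
      (Sym2.lift ⟨fun u v =>
      Real.sqrt ((((paraChainSquare n).degree u : ℝ) + ((paraChainSquare n).degree v : ℝ) - 2) /
        (((paraChainSquare n).degree u : ℝ) * ((paraChainSquare n).degree v : ℝ))),
      fun u v => congrArg Real.sqrt (by ring)⟩ (edgeMap (j, false, true)) +
      Sym2.lift ⟨fun u v =>
      Real.sqrt ((((paraChainSquare n).degree u : ℝ) + ((paraChainSquare n).degree v : ℝ) - 2) /
        (((paraChainSquare n).degree u : ℝ) * ((paraChainSquare n).degree v : ℝ))),
      fun u v => congrArg Real.sqrt (by ring)⟩ (edgeMap (j, false, false))))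
      = 4 * (Real.sqrt 2 / 2) := by
    intro j
    simp only [edgeMap, Sym2.lift_mk]
    rw [hterm j true true, hterm j true false, hterm j false true, hterm j false false]
    ring
  rw [Finset.sum_congr rfl (fun j _ => hsum j), Finset.sum_const, Finset.card_univ,
    Fintype.card_fin, nsmul_eq_mul]
  ring

lemma sum_even (k : ℕ) :
    ∑ j ∈ Finset.range (2*k), T (2*k) j
      = 2 * ∑ i ∈ Finset.Icc 1 k,
          Real.sqrt ((6*(k:ℝ)-1)/((6*(k:ℝ)-3*(i:ℝ)+2)*(3*(i:ℝ)-1))) := by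
  have h1 : ∑ j ∈ Finset.range (2*k), T (2*k) j
      = ∑ j ∈ Finset.Ico 0 k, T (2*k) j + ∑ j ∈ Finset.Ico k (2*k), T (2*k) j := by
    rw [Finset.range_eq_Ico, ← Finset.sum_Ico_consecutive _ (Nat.zero_le k) (by omega)]
  have h2 : ∑ j ∈ Finset.Ico k (2*k), T (2*k) j = ∑ j ∈ Finset.Ico 0 k, T (2*k) j := by
    apply Finset.sum_nbij' (fun j => 2*k - 1 - j) (fun j => 2*k - 1 - j)
    · intro a ha; simp only [Finset.mem_Ico] at *; omega
    · intro a ha; simp only [Finset.mem_Ico] at *; omega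
    · intro a ha; simp only [Finset.mem_Ico] at ha; omega
    · intro a ha; simp only [Finset.mem_Ico] at ha; omega
    · intro a ha
      simp only [Finset.mem_Ico] at ha
      unfold T
      have hc : ((2*k - 1 - a : ℕ):ℝ) = 2*(k:ℝ) - 1 - (a:ℝ) := by
        rw [Nat.cast_sub (by omega), Nat.cast_sub (by omega)]; push_cast; ring
      rw [hc]
      congr 1
      push_cast
      ring
  have h3 : ∑ j ∈ Finset.Ico 0 k, T (2*k) j
      = ∑ i ∈ Finset.Icc 1 k,
          Real.sqrt ((6*(k:ℝ)-1)/((6*(k:ℝ)-3*(i:ℝ)+2)*(3*(i:ℝ)-1))) := by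
    apply Finset.sum_nbij' (fun j => j + 1) (fun i => i - 1)
    · intro a ha; simp only [Finset.mem_Ico, Finset.mem_Icc] at *; omega
    · intro a ha; simp only [Finset.mem_Ico, Finset.mem_Icc] at *; omega
    · intro a ha; simp only [Finset.mem_Ico] at ha; omega
    · intro a ha; simp only [Finset.mem_Icc] at ha; omega
    · intro a ha
      simp only [Finset.mem_Ico] at ha
      unfold T
      congr 1
      push_cast
      ring
  rw [h1, h2, h3]
  ring

lemma sum_odd (k : ℕ) :
    ∑ j ∈ Finset.range (2*k+1), T (2*k+1) j
      = 2 * (∑ i ∈ Finset.Icc 1 k,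
          Real.sqrt ((6*(k:ℝ)+2)/((6*(k:ℝ)-3*(i:ℝ)+5)*(3*(i:ℝ)-1))))
        + Real.sqrt (6*(k:ℝ)+2) / (3*(k:ℝ)+2) := by
  have h1 : ∑ j ∈ Finset.range (2*k+1), T (2*k+1) j
      = (∑ j ∈ Finset.Ico 0 k, T (2*k+1) j + ∑ j ∈ Finset.Ico k (k+1), T (2*k+1) j)
        + ∑ j ∈ Finset.Ico (k+1) (2*k+1), T (2*k+1) j := by
    rw [Finset.range_eq_Ico, ← Finset.sum_Ico_consecutive _ (by omega : 0 ≤ k+1) (by omega),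
      ← Finset.sum_Ico_consecutive _ (by omega : 0 ≤ k) (by omega : k ≤ k+1)]
  have hmid : ∑ j ∈ Finset.Ico k (k+1), T (2*k+1) j
      = Real.sqrt (6*(k:ℝ)+2) / (3*(k:ℝ)+2) := by
    rw [Nat.Ico_succ_singleton, Finset.sum_singleton]
    unfold T
    have harg : (3 * ((2*k+1 : ℕ):ℝ) - 1) / ((3 * (k:ℝ) + 2) * (3 * ((2*k+1:ℕ):ℝ) - 3 * (k:ℝ) - 1))
        = (6*(k:ℝ)+2) / ((3*(k:ℝ)+2)^2) := by
      push_cast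
      ring
    rw [harg, Real.sqrt_div (by positivity), Real.sqrt_sq (by positivity)]
  have h2 : ∑ j ∈ Finset.Ico (k+1) (2*k+1), T (2*k+1) j
      = ∑ j ∈ Finset.Ico 0 k, T (2*k+1) j := by
    apply Finset.sum_nbij' (fun j => 2*k - j) (fun j => 2*k - j)
    · intro a ha; simp only [Finset.mem_Ico] at *; omega
    · intro a ha; simp only [Finset.mem_Ico] at *; omega
    · intro a ha; simp only [Finset.mem_Ico] at ha; omega
    · intro a ha; simp only [Finset.mem_Ico] at ha; omega
    · intro a ha
      simp only [Finset.mem_Ico] at ha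
      unfold T
      have hc : ((2*k - a : ℕ):ℝ) = 2*(k:ℝ) - (a:ℝ) := by
        rw [Nat.cast_sub (by omega)]; push_cast; ring
      rw [hc]
      congr 1
      push_cast
      ring
  have h3 : ∑ j ∈ Finset.Ico 0 k, T (2*k+1) j
      = ∑ i ∈ Finset.Icc 1 k,
          Real.sqrt ((6*(k:ℝ)+2)/((6*(k:ℝ)-3*(i:ℝ)+5)*(3*(i:ℝ)-1))) := by
    apply Finset.sum_nbij' (fun j => j + 1) (fun i => i - 1)
    · intro a ha; simp only [Finset.mem_Ico, Finset.mem_Icc] at *; omega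
    · intro a ha; simp only [Finset.mem_Ico, Finset.mem_Icc] at *; omega
    · intro a ha; simp only [Finset.mem_Ico] at ha; omega
    · intro a ha; simp only [Finset.mem_Icc] at ha; omega
    · intro a ha
      simp only [Finset.mem_Ico] at ha
      unfold T
      congr 1
      push_cast
      ring
  rw [h1, h2, h3, hmid]
  ring

end PCS

theorem paraChainSquare_indices (n : ℕ) :
    (∀ k : ℕ, 1 ≤ k →
      (n = 2 * k →
        abcggIndex (paraChainSquare n) =
          8 * ∑ i ∈ Finset.Icc 1 k,
            Real.sqrt ((6 * (k : ℝ) - 1) /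
              ((6 * (k : ℝ) - 3 * (i : ℝ) + 2) * (3 * (i : ℝ) - 1)))) ∧
      (n = 2 * k + 1 →
        abcggIndex (paraChainSquare n) =
          8 * (∑ i ∈ Finset.Icc 1 k,
            Real.sqrt ((6 * (k : ℝ) + 2) /
              ((6 * (k : ℝ) - 3 * (i : ℝ) + 5) * (3 * (i : ℝ) - 1)))) +
          4 * Real.sqrt (6 * (k : ℝ) + 2) / (3 * (k : ℝ) + 2))) ∧
    (2 ≤ n →
      abcIndex (paraChainSquare n) = 2 * (n : ℝ) * Real.sqrt 2) := by
  refine ⟨?_, fun _ => PCS.abc_formula⟩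
  intro k _
  constructor
  · rintro rfl
    rw [PCS.abcgg_formula,
      Fin.sum_univ_eq_sum_range (fun j => 4 * PCS.T (2*k) j) (2*k),
      ← Finset.mul_sum, PCS.sum_even]
    ring
  · rintro rfl
    rw [PCS.abcgg_formula,
      Fin.sum_univ_eq_sum_range (fun j => 4 * PCS.T (2*k+1) j) (2*k+1),
      ← Finset.mul_sum, PCS.sum_odd]
    ring
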